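/- arXiv:2306.08321 — 2 statements merged into one kernel-verified Lean document; each statement's English description precedes it below -/
import Mathlib

section
/- Let u_1,…,u_N ∈ S^d be pairwise distinct and let a_1,…,a_N be nonzero real numbers. Then Σ_{i=1}^N a_i σ((xᵀ,1)u_i) = 0 for all x ∈ B^d if and only if both of the following hold: (1) for every index i with u_i ∈ S_0 there exists an index j ≠ i such that u_j = -u_i and a_j = -a_i; (2) (1/2) Σ_{i : u_i ∈ S_0} a_i u_i + Σ_{i : u_i ∈ S_+} a_i u_i = 0 in ℝ^{d+1}. -/
open MeasureTheory Real

noncomputable section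

/-- Euclidean space ℝ^d. -/
abbrev E (d : ℕ) := EuclideanSpace ℝ (Fin d)

/-- The ReLU function σ(t) = max{t, 0}. -/
def relu (t : ℝ) : ℝ := max t 0

/-- The quantity (xᵀ,1)v : the inner product of (x,1) ∈ ℝ^{d+1} with v ∈ ℝ^{d+1}. -/
def aff {d : ℕ} (x : E d) (v : E (d + 1)) : ℝ :=
  (∑ i : Fin d, x i * v i.castSucc) + v (Fin.last d)

/-- Parameters θ = (a_1, w_1, …, a_N, w_N) of a shallow ReLU network of width N. -/
abbrev Params (d N : ℕ) := (Fin N → ℝ) × (Fin N → E (d + 1))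

/-- The network function f_θ(x) = Σ_i a_i σ((xᵀ,1) w_i). -/
def networkFn {d N : ℕ} (θ : Params d N) (x : E d) : ℝ :=
  ∑ i, θ.1 i * relu (aff x (θ.2 i))

/-- The path norm κ(θ) = Σ_i |a_i| ‖w_i‖₂. -/
def pathNorm {d N : ℕ} (θ : Params d N) : ℝ :=
  ∑ i, |θ.1 i| * ‖θ.2 i‖

/-- The squared Euclidean norm ‖θ‖₂² of the parameter vector. -/
def paramNormSq {d N : ℕ} (θ : Params d N) : ℝ :=
  (∑ i, (θ.1 i) ^ 2) + ∑ i, ‖θ.2 i‖ ^ 2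

/-- NN(N): functions on the unit ball B^d realized by a width-N shallow ReLU network. -/
def NNclass (d N : ℕ) : Set (E d → ℝ) :=
  {f | ∃ θ : Params d N, ∀ x : E d, ‖x‖ ≤ 1 → f x = networkFn θ x}

/-- NN(N, M): functions realized by a width-N network with path norm κ(θ) ≤ M. -/
def NNclassM (d N : ℕ) (M : ℝ) : Set (E d → ℝ) :=
  {f | ∃ θ : Params d N, pathNorm θ ≤ M ∧ ∀ x : E d, ‖x‖ ≤ 1 → f x = networkFn θ x}

/-- κ(f) = inf{ Σ_j |c_j| : f(x) = Σ_j c_j σ((xᵀ,1)v_j) on B^d, v_j ∈ S^d }. -/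
def kappaF {d : ℕ} (f : E d → ℝ) : ℝ :=
  sInf {s | ∃ (m : ℕ) (c : Fin m → ℝ) (v : Fin m → E (d + 1)),
    (∀ j, ‖v j‖ = 1) ∧ (∀ x : E d, ‖x‖ ≤ 1 → f x = ∑ j, c j * relu (aff x (v j))) ∧
    s = ∑ j, |c j|}

/-- S_- = {v ∈ S^d : v_{d+1} ≤ -√2/2}. -/
def Sminus (d : ℕ) : Set (E (d + 1)) :=
  {v | ‖v‖ = 1 ∧ v (Fin.last d) ≤ -(Real.sqrt 2 / 2)}

/-- S_+ = -S_-. -/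
def Splus (d : ℕ) : Set (E (d + 1)) := {v | -v ∈ Sminus d}

/-- S_0 = S^d \ (S_- ∪ S_+). -/
def Szero (d : ℕ) : Set (E (d + 1)) := {v | ‖v‖ = 1} \ (Sminus d ∪ Splus d)

/-- The variation class F_σ(M): functions f(x) = ∫_{S^d} σ((xᵀ,1)v) dμ(v) for a signed Radon
measure μ on S^d with ‖μ‖ ≤ M (represented by its Jordan decomposition μ = μp - μn). -/
def Fsigma (d : ℕ) (M : ℝ) : Set (E d → ℝ) :=
  {f | ∃ μp μn : Measure (E (d + 1)), IsFiniteMeasure μp ∧ IsFiniteMeasure μn ∧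
    μp {v | ‖v‖ = 1}ᶜ = 0 ∧ μn {v | ‖v‖ = 1}ᶜ = 0 ∧
    (μp Set.univ).toReal + (μn Set.univ).toReal ≤ M ∧
    ∀ x : E d, ‖x‖ ≤ 1 →
      f x = (∫ v, relu (aff x v) ∂μp) - ∫ v, relu (aff x v) ∂μn}

/-- Empirical L²(μ_n) norm: ‖f‖_{L²(μ_n)} = ((1/n) Σ_i f(X_i)²)^{1/2}. -/
def empNorm {d n : ℕ} (X : Fin n → E d) (f : E d → ℝ) : ℝ :=
  Real.sqrt ((∑ i, (f (X i)) ^ 2) / n)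

/-- Local complexity G_n(F; δ, ξ) = E[ sup { |(1/n) Σ_i ξ_i f(X_i)| : f ∈ F, ‖f‖_{L²(μ_n)} ≤ δ} ]. -/
def localComplexity {d n : ℕ} {Ω : Type*} [MeasurableSpace Ω] (P : Measure Ω)
    (F : Set (E d → ℝ)) (X : Fin n → E d) (δ : ℝ) (ξ : Fin n → Ω → ℝ) : ℝ :=
  ∫ ω, sSup {r | ∃ f ∈ F, empNorm X f ≤ δ ∧ r = |(∑ i, ξ i ω * f (X i)) / n|} ∂P

/-- star(F) = {a f : f ∈ F, a ∈ [0,1]}. -/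
def starHull {d : ℕ} (F : Set (E d → ℝ)) : Set (E d → ℝ) :=
  {g | ∃ f ∈ F, ∃ a : ℝ, 0 ≤ a ∧ a ≤ 1 ∧ g = fun x => a * f x}

/-- ∂F = {f₁ - f₂ : f₁, f₂ ∈ F}. -/
def diffClass {d : ℕ} (F : Set (E d → ℝ)) : Set (E d → ℝ) :=
  {g | ∃ f₁ ∈ F, ∃ f₂ ∈ F, g = f₁ - f₂}

/-- Truncation operator T_b. -/
def truncate {d : ℕ} (b : ℝ) (f : E d → ℝ) : E d → ℝ := fun x => max (-b) (min b (f x))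

/-- The Hölder ball H^α on B^d. -/
def HolderBall (d : ℕ) (α : ℝ) : Set (E d → ℝ) :=
  {h | ∃ (r : ℕ) (β : ℝ) (g : E d → ℝ), α = r + β ∧ 0 < β ∧ β ≤ 1 ∧
    (∀ x : E d, ‖x‖ ≤ 1 → g x = h x) ∧ ContDiff ℝ r g ∧
    (∀ k : ℕ, k ≤ r → ∀ x, ‖iteratedFDeriv ℝ k g x‖ ≤ 1) ∧
    (∀ x y : E d, ‖iteratedFDeriv ℝ r g x - iteratedFDeriv ℝ r g y‖ ≤ ‖x - y‖ ^ β)}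

/-!
On the unit ball the hyperplane `{(xᵀ,1)u = 0}` of a direction `u ∈ S_-` or `u ∈ S_+` misses the
open ball, so `σ((xᵀ,1)u)` is `0`, resp. `(xᵀ,1)u`, there, while for `u ∈ S_0` it cuts the open
ball and `σ(t) = t/2 + |t|/2` contributes a kink `|(xᵀ,1)u|/2`. If the directions in `S_0` come in
antipodal pairs with opposite weights, the kinks cancel and the network is the affine function
`x ↦ (xᵀ,1)w` with `w` the vector of condition (2), which vanishes on the ball iff `w = 0`.

Conversely, pick a point `x₀` of the open ball on the kink of `u_i ∈ S_0` but on no kink of a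
direction other than `±u_i`. The second difference of the vanishing network at `x₀` in the normal
direction of that kink only sees the ReLUs of `u_i` and of `-u_i`, both contributing the same
positive amount; hence `-u_i = u_j` for some `j` (as `a_i ≠ 0`) and `a_j = -a_i`.
-/
open Filter Topology
open scoped RealInnerProductSpace

variable {d : ℕ}

def weightPart : E (d + 1) →ₗ[ℝ] E d where
  toFun u := WithLp.toLp 2 fun i => u i.castSucc
  map_add' _ _ := rfl
  map_smul' _ _ := rfl

@[simp]
lemma weightPart_apply (u : E (d + 1)) (i : Fin d) : weightPart u i = u i.castSucc := rfl

lemma aff_eq_inner_add (x : E d) (u : E (d + 1)) :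
    aff x u = ⟪x, weightPart u⟫ + u (Fin.last d) := by
  simp [aff, PiLp.inner_apply, mul_comm]

lemma norm_sq_eq_norm_weightPart_sq_add (u : E (d + 1)) :
    ‖u‖ ^ 2 = ‖weightPart u‖ ^ 2 + u (Fin.last d) ^ 2 := by
  simp only [EuclideanSpace.norm_sq_eq, Real.norm_eq_abs, sq_abs, weightPart_apply,
    Fin.sum_univ_castSucc]

lemma ext_weightPart {u v : E (d + 1)} (h : weightPart u = weightPart v)
    (hlast : u (Fin.last d) = v (Fin.last d)) : u = v := by
  ext j
  induction j using Fin.lastCases with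
  | last => exact hlast
  | cast i => simpa using congrArg (· i) h

def affLinear (x : E d) : E (d + 1) →ₗ[ℝ] ℝ where
  toFun u := aff x u
  map_add' u v := by
    simp only [aff_eq_inner_add, map_add, inner_add_right, PiLp.add_apply]
    ring
  map_smul' c u := by
    simp only [aff_eq_inner_add, map_smul, inner_smul_right, PiLp.smul_apply, smul_eq_mul,
      RingHom.id_apply]
    ring

@[simp]
lemma affLinear_apply (x : E d) (u : E (d + 1)) : affLinear x u = aff x u := rfl

def affAffine (u : E (d + 1)) : E d →ᵃ[ℝ] ℝ where
  toFun x := aff x u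
  linear := innerₛₗ ℝ (weightPart u)
  map_vadd' x v := by
    simp only [aff_eq_inner_add, vadd_eq_add, inner_add_left, innerₛₗ_apply_apply, real_inner_comm]
    ring

@[simp]
lemma affAffine_apply (u : E (d + 1)) (x : E d) : affAffine u x = aff x u := rfl

lemma aff_neg (x : E d) (u : E (d + 1)) : aff x (-u) = -aff x u := map_neg (affLinear x) u

lemma aff_add_smul_left (x v : E d) (t : ℝ) (u : E (d + 1)) :
    aff (x + t • v) u = aff x u + t * ⟪v, weightPart u⟫ := by
  simp only [aff_eq_inner_add, inner_add_left, real_inner_smul_left]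
  ring

lemma eq_zero_of_forall_aff_eq_zero {w : E (d + 1)} (h : ∀ x : E d, ‖x‖ ≤ 1 → aff x w = 0) :
    w = 0 := by
  have hlast : w (Fin.last d) = 0 := by simpa [aff] using h 0 (by simp)
  have hx : ‖(1 + ‖weightPart w‖)⁻¹ • weightPart w‖ ≤ 1 := by
    rw [norm_smul, norm_inv, Real.norm_of_nonneg (by positivity), inv_mul_le_one₀ (by positivity)]
    linarith
  have hp : (1 + ‖weightPart w‖)⁻¹ * ‖weightPart w‖ ^ 2 = 0 := by
    simpa [aff_eq_inner_add, hlast, real_inner_smul_left, real_inner_self_eq_norm_sq]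
      using h _ hx
  have hp0 : weightPart w = 0 := by
    have : (1 + ‖weightPart w‖)⁻¹ ≠ 0 := by positivity
    simpa [this] using hp
  exact ext_weightPart (by rw [hp0, map_zero]) (by simp [hlast])

lemma sqrt_two_div_two_sq : (√2 / 2) ^ 2 = 1 / 2 := by
  rw [div_pow, Real.sq_sqrt zero_le_two]; norm_num

lemma mem_Splus_iff {u : E (d + 1)} :
    u ∈ Splus d ↔ ‖u‖ = 1 ∧ √2 / 2 ≤ u (Fin.last d) := by
  simp [Splus, Sminus, neg_le_neg_iff]

lemma mem_Szero_iff {u : E (d + 1)} (hu : ‖u‖ = 1) :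
    u ∈ Szero d ↔ |u (Fin.last d)| < √2 / 2 := by
  simp [Szero, Sminus, mem_Splus_iff, hu, abs_lt, and_comm]

lemma mem_Sminus_or_mem_Splus_or_mem_Szero {u : E (d + 1)} (hu : ‖u‖ = 1) :
    u ∈ Sminus d ∨ u ∈ Splus d ∨ u ∈ Szero d := by
  simp only [Szero, Set.mem_sdiff, Set.mem_ofPred_eq, hu, Set.mem_union, true_and]
  tauto

lemma disjoint_Sminus_Splus : Disjoint (Sminus d) (Splus d) := by
  rw [Set.disjoint_left]
  intro u hm hp
  have : (0 : ℝ) < √2 / 2 := by positivity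
  linarith [hm.2, (mem_Splus_iff.1 hp).2]

lemma neg_mem_Szero {u : E (d + 1)} (h : u ∈ Szero d) : -u ∈ Szero d := by
  have hu : ‖u‖ = 1 := h.1
  rw [mem_Szero_iff hu] at h
  rwa [mem_Szero_iff (by rwa [norm_neg]), PiLp.neg_apply, abs_neg]

lemma abs_last_lt_norm_weightPart {u : E (d + 1)} (h : u ∈ Szero d) :
    |u (Fin.last d)| < ‖weightPart u‖ := by
  have hu : ‖u‖ = 1 := h.1
  have hc := (mem_Szero_iff hu).1 h
  have hsplit := norm_sq_eq_norm_weightPart_sq_add u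
  have hc2 : |u (Fin.last d)| ^ 2 < 1 / 2 := by
    rw [← sqrt_two_div_two_sq]; gcongr
  rw [hu, ← sq_abs (u (Fin.last d))] at hsplit
  exact lt_of_pow_lt_pow_left₀ 2 (norm_nonneg _) (by linarith)

lemma aff_nonpos_of_mem_Sminus {u : E (d + 1)} (h : u ∈ Sminus d) {x : E d} (hx : ‖x‖ ≤ 1) :
    aff x u ≤ 0 := by
  obtain ⟨hu, hc⟩ := h
  have hcs : ⟪x, weightPart u⟫ ≤ ‖weightPart u‖ :=
    (real_inner_le_norm _ _).trans (mul_le_of_le_one_left (norm_nonneg _) hx)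
  have hsplit := norm_sq_eq_norm_weightPart_sq_add u
  rw [hu] at hsplit
  have h2 : (0 : ℝ) < √2 / 2 := by positivity
  rw [aff_eq_inner_add]
  nlinarith [sqrt_two_div_two_sq, norm_nonneg (weightPart u)]

lemma aff_nonneg_of_mem_Splus {u : E (d + 1)} (h : u ∈ Splus d) {x : E d} (hx : ‖x‖ ≤ 1) :
    0 ≤ aff x u := by
  simpa [aff_neg] using aff_nonpos_of_mem_Sminus h hx

lemma relu_of_nonpos {t : ℝ} (h : t ≤ 0) : relu t = 0 := max_eq_right h

lemma relu_of_nonneg {t : ℝ} (h : 0 ≤ t) : relu t = t := max_eq_left h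

lemma relu_eq_half_add_half_abs (t : ℝ) : relu t = t / 2 + |t| / 2 := by
  rcases le_total t 0 with h | h
  · rw [relu_of_nonpos h, abs_of_nonpos h]; ring
  · rw [relu_of_nonneg h, abs_of_nonneg h]; ring

def reluSecondDiff (α s : ℝ) : ℝ := relu (α + s) + relu (α - s) - 2 * relu α

lemma reluSecondDiff_zero_left (s : ℝ) : reluSecondDiff 0 s = |s| := by
  simp only [reluSecondDiff, relu_eq_half_add_half_abs, zero_add, zero_sub, abs_neg, abs_zero]
  ring

lemma reluSecondDiff_eq_zero_of_abs_le {α s : ℝ} (h : |s| ≤ |α|) : reluSecondDiff α s = 0 := by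
  rcases le_total 0 α with hα | hα
  · rw [abs_of_nonneg hα, abs_le] at h
    rw [reluSecondDiff, relu_of_nonneg (by linarith), relu_of_nonneg (by linarith),
      relu_of_nonneg hα]
    ring
  · rw [abs_of_nonpos hα, abs_le] at h
    rw [reluSecondDiff, relu_of_nonpos (by linarith), relu_of_nonpos (by linarith),
      relu_of_nonpos hα]
    ring

lemma eventually_reluSecondDiff_eq_zero {α : ℝ} (hα : α ≠ 0) (B : ℝ) :
    ∀ᶠ t in 𝓝 0, reluSecondDiff α (t * B) = 0 := by
  have : Tendsto (fun t : ℝ => |t * B|) (𝓝 0) (𝓝 0) := by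
    simpa using (continuous_mul_const B).abs.tendsto 0
  filter_upwards [this.eventually_le_const (abs_pos.2 hα)] with t ht
  exact reluSecondDiff_eq_zero_of_abs_le ht

section Decomposition

variable {N : ℕ} (u : Fin N → E (d + 1)) (a : Fin N → ℝ)

def PairedOnSzero : Prop :=
  ∀ i, u i ∈ Szero d → ∃ j, j ≠ i ∧ u j = -u i ∧ a j = -a i

open Classical in
def linearPart : E (d + 1) :=
  (1 / 2 : ℝ) • (∑ i, if u i ∈ Szero d then a i • u i else 0) +
    ∑ i, if u i ∈ Splus d then a i • u i else 0

variable {u a}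

lemma sum_filter_Szero_eq_zero_of_even [DecidablePred fun i => u i ∈ Szero d]
    (hinj : Function.Injective u) (hpair : PairedOnSzero u a)
    (φ : E (d + 1) → ℝ) (hφ : ∀ v, φ (-v) = φ v) :
    ∑ i ∈ Finset.univ.filter (fun i => u i ∈ Szero d), a i * φ (u i) = 0 := by
  have hmem (i) (hi : i ∈ Finset.univ.filter (fun i => u i ∈ Szero d)) : u i ∈ Szero d :=
    (Finset.mem_filter.1 hi).2
  refine Finset.sum_involution (fun i hi => (hpair i (hmem i hi)).choose)
    (fun i hi => ?_) (fun i hi _ => (hpair i (hmem i hi)).choose_spec.1) (fun i hi => ?_)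
    (fun i hi => ?_)
  · obtain ⟨-, hu, ha⟩ := (hpair i (hmem i hi)).choose_spec
    rw [hu, ha, hφ]; ring
  · rw [Finset.mem_filter, (hpair i (hmem i hi)).choose_spec.2.1]
    exact ⟨Finset.mem_univ _, neg_mem_Szero (hmem i hi)⟩
  · have hj := (hpair i (hmem i hi)).choose_spec.2.1
    have hjS : u (hpair i (hmem i hi)).choose ∈ Szero d := by
      rw [hj]; exact neg_mem_Szero (hmem i hi)
    apply hinj
    rw [(hpair _ hjS).choose_spec.2.1, hj, neg_neg]

open Classical in
lemma relu_aff_eq {v : E (d + 1)} (hv : ‖v‖ = 1) {x : E d} (hx : ‖x‖ ≤ 1) :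
    relu (aff x v) = (if v ∈ Szero d then aff x v / 2 else 0) +
      (if v ∈ Splus d then aff x v else 0) + (if v ∈ Szero d then |aff x v| / 2 else 0) := by
  rcases mem_Sminus_or_mem_Splus_or_mem_Szero hv with h | h | h
  · have hp : v ∉ Splus d := Set.disjoint_left.1 disjoint_Sminus_Splus h
    have hz : v ∉ Szero d := fun hz => hz.2 (Or.inl h)
    simp [hp, hz, relu_of_nonpos (aff_nonpos_of_mem_Sminus h hx)]
  · have hz : v ∉ Szero d := fun hz => hz.2 (Or.inr h)
    simp [h, hz, relu_of_nonneg (aff_nonneg_of_mem_Splus h hx)]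
  · have hp : v ∉ Splus d := fun hp => h.2 (Or.inr hp)
    simp [h, hp, relu_eq_half_add_half_abs]

lemma sum_relu_aff_eq_aff_linearPart (hu : ∀ i, ‖u i‖ = 1) (hinj : Function.Injective u)
    (hpair : PairedOnSzero u a) {x : E d} (hx : ‖x‖ ≤ 1) :
    ∑ i, a i * relu (aff x (u i)) = aff x (linearPart u a) := by
  classical
  have hkinks := sum_filter_Szero_eq_zero_of_even hinj hpair (fun v => |aff x v| / 2)
    (fun v => by rw [aff_neg, abs_neg])
  rw [Finset.sum_filter] at hkinks
  have hlin : aff x (linearPart u a) = ∑ i, ((if u i ∈ Szero d then a i * (aff x (u i) / 2) else 0)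
      + if u i ∈ Splus d then a i * aff x (u i) else 0) := by
    simp only [linearPart, ← affLinear_apply, map_add, map_smul, map_sum, apply_ite, map_zero]
    simp only [affLinear_apply, smul_eq_mul, Finset.mul_sum, ← Finset.sum_add_distrib]
    refine Finset.sum_congr rfl fun i _ => ?_
    split_ifs <;> ring
  simp only [relu_aff_eq (hu _) hx, mul_add, Finset.sum_add_distrib, mul_ite, mul_zero, hkinks,
    add_zero, hlin]

end Decomposition

lemma exists_mem_open_forall_ne_zero {V ι : Type*} [AddCommGroup V] [Module ℝ V]
    [TopologicalSpace V] [IsTopologicalAddGroup V] [ContinuousSMul ℝ V]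
    {U : Set V} (hU : IsOpen U) (g : V →ᵃ[ℝ] ℝ) (f : ι → V →ᵃ[ℝ] ℝ) {x₀ : V} (hx₀U : x₀ ∈ U)
    (hx₀ : g x₀ = 0) (K : Finset ι) (hf : ∀ k ∈ K, ∃ y, g y = 0 ∧ f k y ≠ 0) :
    ∃ x ∈ U, g x = 0 ∧ ∀ k ∈ K, f k x ≠ 0 := by
  classical
  induction K using Finset.induction_on with
  | empty => exact ⟨x₀, hx₀U, hx₀, by simp⟩
  | insert k K _ ih =>
    obtain ⟨x, hxU, hx, hxK⟩ := ih fun k' hk' => hf k' (Finset.mem_insert_of_mem hk')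
    by_cases hkx : f k x ≠ 0
    · exact ⟨x, hxU, hx, Finset.forall_mem_insert _ _ _ |>.2 ⟨hkx, hxK⟩⟩
    obtain ⟨y, hy, hky⟩ := hf k (Finset.mem_insert_self k K)
    -- Move from `x` towards `y` inside the hyperplane; `f k` becomes `t * f k y` along the way.
    have hU' : ∀ᶠ t in 𝓝 (0 : ℝ), AffineMap.lineMap x y t ∈ U :=
      AffineMap.lineMap_continuous.continuousAt.preimage_mem_nhds
        (by simpa using hU.mem_nhds hxU)
    have hK' : ∀ᶠ t in 𝓝 (0 : ℝ), ∀ k' ∈ K, f k' (AffineMap.lineMap x y t) ≠ 0 := by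
      rw [eventually_all_finset]
      intro k' hk'
      simp only [AffineMap.apply_lineMap]
      exact AffineMap.lineMap_continuous.continuousAt.eventually_ne
        (by simpa using hxK k' hk')
    obtain ⟨t, ⟨htU, htK⟩, ht⟩ :=
      ((hU'.and hK').filter_mono nhdsWithin_le_nhds |>.and self_mem_nhdsWithin).exists
        (f := 𝓝[≠] (0 : ℝ))
    refine ⟨AffineMap.lineMap x y t, htU, ?_, Finset.forall_mem_insert _ _ _ |>.2 ⟨?_, htK⟩⟩
    · simp [AffineMap.apply_lineMap, hx, hy]
    · simpa [AffineMap.apply_lineMap, not_not.1 hkx, AffineMap.lineMap_apply_ring'] using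
        ⟨ht, hky⟩

lemma exists_eq_smul_of_forall_aff_eq_zero {v w : E (d + 1)} (hv : weightPart v ≠ 0)
    (h : ∀ y : E d, aff y v = 0 → aff y w = 0) : ∃ c : ℝ, w = c • v := by
  set p := weightPart v
  set y₀ : E d := (-v (Fin.last d) / ‖p‖ ^ 2) • p
  have hp : ‖p‖ ^ 2 ≠ 0 := by positivity
  have hy₀ : ⟪y₀, p⟫ = -v (Fin.last d) := by
    rw [real_inner_smul_left, real_inner_self_eq_norm_sq]; field_simp
  have hwz (z : E d) (hz : z ∈ (ℝ ∙ p)ᗮ) : aff y₀ w + ⟪z, weightPart w⟫ = 0 := by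
    have hzp : ⟪z, p⟫ = 0 := Submodule.mem_orthogonal_singleton_iff_inner_left.1 hz
    have := h (y₀ + z) (by rw [aff_eq_inner_add, inner_add_left, hy₀, hzp]; ring)
    rwa [aff_eq_inner_add, inner_add_left, add_right_comm, ← aff_eq_inner_add] at this
  have hy₀w : aff y₀ w = 0 := by simpa using hwz 0 (Submodule.zero_mem _)
  -- `y₀ + (ℝ ∙ p)ᗮ` lies in the hyperplane, so `weightPart w` is orthogonal to `(ℝ ∙ p)ᗮ`.
  have hq : weightPart w ∈ (ℝ ∙ p)ᗮᗮ := by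
    rw [Submodule.mem_orthogonal]
    intro z hz
    simpa [hy₀w] using hwz z hz
  rw [Submodule.orthogonal_orthogonal, Submodule.mem_span_singleton] at hq
  obtain ⟨c, hc⟩ := hq
  refine ⟨c, ext_weightPart (by rw [← hc, map_smul]) ?_⟩
  rw [aff_eq_inner_add, ← hc, real_inner_smul_right, hy₀] at hy₀w
  simp only [PiLp.smul_apply, smul_eq_mul]
  linarith

lemma eq_or_eq_neg_of_eq_smul {V : Type*} [NormedAddCommGroup V] [NormedSpace ℝ V] {v w : V}
    (hv : ‖v‖ = 1) (hw : ‖w‖ = 1) {c : ℝ} (h : w = c • v) : w = v ∨ w = -v := by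
  rw [h, norm_smul, hv, mul_one, Real.norm_eq_abs] at hw
  rcases abs_eq zero_le_one |>.1 hw with rfl | rfl
  · simp [h]
  · simp [h]

lemma exists_aff_eq_zero_and_aff_ne_zero {v w : E (d + 1)} (hv : v ∈ Szero d) (hw : ‖w‖ = 1)
    (hwv : w ≠ v) (hwnv : w ≠ -v) : ∃ y : E d, aff y v = 0 ∧ aff y w ≠ 0 := by
  by_contra! h
  have hp : weightPart v ≠ 0 :=
    norm_pos_iff.1 ((abs_nonneg _).trans_lt (abs_last_lt_norm_weightPart hv))
  obtain ⟨c, hc⟩ := exists_eq_smul_of_forall_aff_eq_zero hp h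
  rcases eq_or_eq_neg_of_eq_smul hv.1 hw hc with h' | h'
  exacts [hwv h', hwnv h']

lemma exists_aff_eq_zero_of_mem_Szero {v : E (d + 1)} (hv : v ∈ Szero d) :
    ∃ x₀ : E d, ‖x₀‖ < 1 ∧ aff x₀ v = 0 := by
  have hlt := abs_last_lt_norm_weightPart hv
  have hp : 0 < ‖weightPart v‖ := (abs_nonneg _).trans_lt hlt
  refine ⟨(-v (Fin.last d) / ‖weightPart v‖ ^ 2) • weightPart v, ?_, ?_⟩
  · rw [norm_smul, norm_div, norm_neg, norm_pow, norm_norm, Real.norm_eq_abs, div_mul_eq_mul_div,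
      div_lt_one (by positivity), sq]
    exact mul_lt_mul_of_pos_right hlt hp
  · rw [aff_eq_inner_add, real_inner_smul_left, real_inner_self_eq_norm_sq]
    field_simp
    ring

lemma exists_generic_point_on_kink {N : ℕ} {u : Fin N → E (d + 1)} (hu : ∀ k, ‖u k‖ = 1) {i : Fin N}
    (hi : u i ∈ Szero d) :
    ∃ x₀ : E d, ‖x₀‖ < 1 ∧ aff x₀ (u i) = 0 ∧
      ∀ k, u k ≠ u i → u k ≠ -u i → aff x₀ (u k) ≠ 0 := by
  classical
  obtain ⟨x₁, hx₁, hx₁i⟩ := exists_aff_eq_zero_of_mem_Szero hi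
  have hx₁U : x₁ ∈ Metric.ball (0 : E d) 1 := by simpa using hx₁
  have hK : ∀ k ∈ Finset.univ.filter (fun k => u k ≠ u i ∧ u k ≠ -u i),
      ∃ y, affAffine (u i) y = 0 ∧ affAffine (u k) y ≠ 0 := by
    intro k hk
    rw [Finset.mem_filter] at hk
    simpa using exists_aff_eq_zero_and_aff_ne_zero hi (hu k) hk.2.1 hk.2.2
  obtain ⟨x₀, hx₀, hx₀i, hx₀K⟩ := exists_mem_open_forall_ne_zero Metric.isOpen_ball
    (affAffine (u i)) (fun k => affAffine (u k)) hx₁U hx₁i _ hK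
  refine ⟨x₀, by simpa using hx₀, hx₀i, fun k hki hkni => ?_⟩
  simpa using hx₀K k (by simp [hki, hkni])

lemma sum_mul_reluSecondDiff_eq_zero {N : ℕ} {u : Fin N → E (d + 1)} {a : Fin N → ℝ}
    (hf : ∀ x : E d, ‖x‖ ≤ 1 → ∑ i, a i * relu (aff x (u i)) = 0) {x₀ v : E d} {t : ℝ}
    (h₀ : ‖x₀‖ ≤ 1) (hplus : ‖x₀ + t • v‖ ≤ 1) (hminus : ‖x₀ - t • v‖ ≤ 1) :
    ∑ k, a k * reluSecondDiff (aff x₀ (u k)) (t * ⟪v, weightPart (u k)⟫) = 0 := by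
  have hline (s : ℝ) (hs : ‖x₀ + s • v‖ ≤ 1) :
      ∑ k, a k * relu (aff x₀ (u k) + s * ⟪v, weightPart (u k)⟫) = 0 := by
    simpa only [aff_add_smul_left] using hf _ hs
  have hp := hline t hplus
  have hm := hline (-t) (by rwa [neg_smul, ← sub_eq_add_neg])
  simp only [neg_mul, ← sub_eq_add_neg] at hm
  simp only [reluSecondDiff, mul_sub, mul_add, Finset.sum_sub_distrib, Finset.sum_add_distrib, hp,
    hm, mul_left_comm _ (2 : ℝ), ← Finset.mul_sum, hf x₀ h₀]
  ring

lemma exists_partner_of_sum_mul_eq_zero {ι V : Type*} [Fintype ι] [Neg V] {u : ι → V}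
    {a D : ι → ℝ} (hinj : Function.Injective u) {i : ι} (hui : u i ≠ -u i) (ha : a i ≠ 0)
    {c : ℝ} (hc : c ≠ 0) (hD : ∀ k, u k ≠ u i → u k ≠ -u i → D k = 0)
    (hDi : ∀ k, u k = u i ∨ u k = -u i → D k = c) (hsum : ∑ k, a k * D k = 0) :
    ∃ j, j ≠ i ∧ u j = -u i ∧ a j = -a i := by
  by_cases hj : ∃ j, u j = -u i
  · obtain ⟨j, hj⟩ := hj
    have hji : j ≠ i := by rintro rfl; exact hui hj
    rw [Fintype.sum_eq_add i j hji.symm fun k hk => by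
      rw [hD k (hinj.ne hk.1) fun e => hk.2 (hinj (e.trans hj.symm)), mul_zero],
      hDi i (Or.inl rfl), hDi j (Or.inr hj), ← add_mul] at hsum
    exact ⟨j, hji, hj, by linarith [(mul_eq_zero.1 hsum).resolve_right hc]⟩
  · rw [Fintype.sum_eq_single i fun k hk => by
      rw [hD k (hinj.ne hk) fun e => hj ⟨k, e⟩, mul_zero], hDi i (Or.inl rfl)] at hsum
    exact absurd ((mul_eq_zero.1 hsum).resolve_right hc) ha

lemma ne_neg_of_norm_eq_one {V : Type*} [NormedAddCommGroup V] [NormedSpace ℝ V] {v : V}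
    (hv : ‖v‖ = 1) : v ≠ -v := by
  intro h
  rw [eq_neg_iff_add_eq_zero, ← two_smul ℝ, smul_eq_zero] at h
  rcases h with h | h
  · norm_num at h
  · simp [h] at hv

lemma PairedOnSzero.of_forall_sum_eq_zero {N : ℕ} {u : Fin N → E (d + 1)} {a : Fin N → ℝ}
    (hu : ∀ i, ‖u i‖ = 1) (hinj : Function.Injective u) (ha : ∀ i, a i ≠ 0)
    (hf : ∀ x : E d, ‖x‖ ≤ 1 → ∑ i, a i * relu (aff x (u i)) = 0) : PairedOnSzero u a := by
  intro i hi
  obtain ⟨x₀, hx₀, hx₀i, hx₀k⟩ := exists_generic_point_on_kink hu hi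
  set v := weightPart (u i)
  have hv : 0 < ‖v‖ := (abs_nonneg _).trans_lt (abs_last_lt_norm_weightPart hi)
  have hball (c : ℝ) : ∀ᶠ t in 𝓝 (0 : ℝ), ‖x₀ + (c * t) • v‖ < 1 := by
    have : Continuous fun t : ℝ => ‖x₀ + (c * t) • v‖ := by fun_prop
    exact this.continuousAt.eventually_lt (by simpa using continuousAt_const) (by simpa using hx₀)
  -- Off the kinks of `±u i`, the ReLUs are affine near `x₀`.
  have hflat : ∀ᶠ t in 𝓝 (0 : ℝ), ∀ k, u k ≠ u i → u k ≠ -u i →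
      reluSecondDiff (aff x₀ (u k)) (t * ⟪v, weightPart (u k)⟫) = 0 :=
    eventually_all.2 fun k => eventually_imp_distrib_left.2 fun hk =>
      eventually_imp_distrib_left.2 fun hk' => eventually_reluSecondDiff_eq_zero (hx₀k k hk hk') _
  obtain ⟨t, ⟨⟨htp, htm⟩, htflat⟩, ht⟩ :=
    (((hball 1).and (hball (-1))).and hflat |>.filter_mono nhdsWithin_le_nhds
      |>.and self_mem_nhdsWithin).exists (f := 𝓝[>] (0 : ℝ))
  refine exists_partner_of_sum_mul_eq_zero hinj (ne_neg_of_norm_eq_one (hu i)) (ha i)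
    (c := t * ‖v‖ ^ 2) (by positivity) htflat (fun k hk => ?_)
    (sum_mul_reluSecondDiff_eq_zero hf hx₀.le (by simpa using htp.le)
      (by simpa [sub_eq_add_neg] using htm.le))
  rcases hk with hk | hk <;>
    simp [hk, aff_neg, hx₀i, reluSecondDiff_zero_left, abs_mul, abs_of_pos ht, v]

open Classical in
theorem statement3_general (d N : ℕ) (u : Fin N → E (d + 1)) (a : Fin N → ℝ)
    (hu : ∀ i, ‖u i‖ = 1) (hdist : Function.Injective u) (ha : ∀ i, a i ≠ 0) :
    (∀ x : E d, ‖x‖ ≤ 1 → ∑ i, a i * relu (aff x (u i)) = 0) ↔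
      ((∀ i, u i ∈ Szero d → ∃ j, j ≠ i ∧ u j = -u i ∧ a j = -a i) ∧
        ((1 / 2 : ℝ) • (∑ i, if u i ∈ Szero d then a i • u i else 0) +
          (∑ i, if u i ∈ Splus d then a i • u i else 0) = (0 : E (d + 1)))) := by
  constructor
  · intro hf
    have hpair : PairedOnSzero u a := .of_forall_sum_eq_zero hu hdist ha hf
    refine ⟨hpair, eq_zero_of_forall_aff_eq_zero fun x hx => ?_⟩
    exact (sum_relu_aff_eq_aff_linearPart hu hdist hpair hx).symm.trans (hf x hx)
  · rintro ⟨hpair, hlin⟩ x hx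
    have hlin : linearPart u a = 0 := hlin
    rw [sum_relu_aff_eq_aff_linearPart hu hdist hpair hx, hlin]
    exact map_zero (affLinear x)

open Classical in
/-- characterization of vanishing finite ReLU ridge combinations. -/
theorem statement3 (d N : ℕ) (hd : 1 ≤ d) (u : Fin N → E (d + 1)) (a : Fin N → ℝ)
    (hu : ∀ i, ‖u i‖ = 1) (hdist : Function.Injective u) (ha : ∀ i, a i ≠ 0) :
    (∀ x : E d, ‖x‖ ≤ 1 → ∑ i, a i * relu (aff x (u i)) = 0) ↔
      ((∀ i, u i ∈ Szero d → ∃ j, j ≠ i ∧ u j = -u i ∧ a j = -a i) ∧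
        ((1 / 2 : ℝ) • (∑ i, if u i ∈ Szero d then a i • u i else 0) +
          (∑ i, if u i ∈ Splus d then a i • u i else 0) = (0 : E (d + 1)))) :=
  statement3_general d N u a hu hdist ha
end
end

section
/- Fix points and labels (X_1,Y_1),…,(X_n,Y_n) ∈ B^d × ℝ, a width N ∈ ℕ and λ > 0, and write L(θ) := (1/n) Σ_{i=1}^n (f_θ(X_i) - Y_i)² for θ ∈ ℝ^{(d+2)N}. If θ* minimizes L(θ) + λ κ(θ) over ℝ^{(d+2)N}, then there exists θ̃* minimizing L(θ) + (λ/2) ‖θ‖₂² over ℝ^{(d+2)N} such that f_{θ*}(x) = f_{θ̃*}(x) for all x ∈ B^d. Conversely, every minimizer of L(θ) + (λ/2) ‖θ‖₂² over ℝ^{(d+2)N} is also a minimizer of L(θ) + λ κ(θ). -/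
open MeasureTheory Real

noncomputable section

/-! Weight decay and the path norm have the same minimizers because `κ(θ)` is the minimum of
`‖θ'‖₂² / 2` over the reparametrizations `θ'` of `θ` that rescale each neuron `(a, w)` to
`(a / s, s • w)` with `s > 0`: these leave `f_θ` unchanged since `relu` is positively
homogeneous, and `2 |a| ‖w‖ ≤ a² + ‖w‖²` with equality when `|a| = ‖w‖`. -/

section Regularizers

variable {α : Type*} {L P Q : α → ℝ} {b : α → α}

theorem map_minimizes_add_upper_of_minimizes_add_lower (hL : ∀ θ, L (b θ) = L θ)
    (hQb : ∀ θ, Q (b θ) = P θ) (hPQ : ∀ θ, P θ ≤ Q θ) {θ₀ : α}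
    (h₀ : ∀ θ, L θ₀ + P θ₀ ≤ L θ + P θ) (θ : α) :
    L (b θ₀) + Q (b θ₀) ≤ L θ + Q θ :=
  calc L (b θ₀) + Q (b θ₀) = L θ₀ + P θ₀ := by rw [hL, hQb]
    _ ≤ L θ + P θ := h₀ θ
    _ ≤ L θ + Q θ := by gcongr; exact hPQ θ

theorem minimizes_add_lower_of_minimizes_add_upper (hL : ∀ θ, L (b θ) = L θ)
    (hQb : ∀ θ, Q (b θ) = P θ) (hPQ : ∀ θ, P θ ≤ Q θ) {θ₀ : α}
    (h₀ : ∀ θ, L θ₀ + Q θ₀ ≤ L θ + Q θ) (θ : α) :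
    L θ₀ + P θ₀ ≤ L θ + P θ :=
  calc L θ₀ + P θ₀ ≤ L θ₀ + Q θ₀ := by gcongr; exact hPQ θ₀
    _ ≤ L (b θ) + Q (b θ) := h₀ (b θ)
    _ = L θ + P θ := by rw [hL, hQb]

end Regularizers

lemma aff_smul {d : ℕ} (x : E d) (c : ℝ) (v : E (d + 1)) :
    aff x (c • v) = c * aff x v := by
  simp only [aff, PiLp.smul_apply, smul_eq_mul, mul_add, Finset.mul_sum]
  congr 1
  exact Finset.sum_congr rfl fun i _ => by ring

lemma aff_zero {d : ℕ} (x : E d) : aff x 0 = 0 := by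
  simpa using aff_smul x 0 0

lemma relu_mul_of_nonneg {c : ℝ} (hc : 0 ≤ c) (t : ℝ) : relu (c * t) = c * relu t := by
  rw [relu, relu, mul_max_of_nonneg _ _ hc, mul_zero]

lemma div_mul_relu_aff_smul {d : ℕ} (x : E d) (a : ℝ) (w : E (d + 1)) {s : ℝ} (hs : 0 < s) :
    a / s * relu (aff x (s • w)) = a * relu (aff x w) := by
  rw [aff_smul, relu_mul_of_nonneg hs.le]
  field_simp

/-- If `a = 0` or `w = 0` this is `0` (`x / 0 = 0`), and the rescaled neuron is `(0, 0)`. -/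
def balancingScale {d : ℕ} (a : ℝ) (w : E (d + 1)) : ℝ := √(|a| / ‖w‖)

def balance {d N : ℕ} (θ : Params d N) : Params d N :=
  (fun i => θ.1 i / balancingScale (θ.1 i) (θ.2 i),
   fun i => balancingScale (θ.1 i) (θ.2 i) • θ.2 i)

lemma balancingScale_pos {d : ℕ} {a : ℝ} {w : E (d + 1)} (ha : a ≠ 0) (hw : w ≠ 0) :
    0 < balancingScale a w := by
  unfold balancingScale
  positivity

lemma balanced_neuron_apply {d : ℕ} (x : E d) (a : ℝ) (w : E (d + 1)) :
    a / balancingScale a w * relu (aff x (balancingScale a w • w)) = a * relu (aff x w) := by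
  rcases eq_or_ne a 0 with rfl | ha
  · simp
  rcases eq_or_ne w 0 with rfl | hw
  · simp [aff_zero, relu]
  exact div_mul_relu_aff_smul x a w (balancingScale_pos ha hw)

lemma balanced_neuron_sq_norm {d : ℕ} (a : ℝ) (w : E (d + 1)) :
    (a / balancingScale a w) ^ 2 + ‖balancingScale a w • w‖ ^ 2 = 2 * (|a| * ‖w‖) := by
  rcases eq_or_ne a 0 with rfl | ha
  · simp [balancingScale]
  rcases eq_or_ne w 0 with rfl | hw
  · simp [balancingScale]
  have hs : balancingScale a w ^ 2 = |a| / ‖w‖ := Real.sq_sqrt (by positivity)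
  have hw' : ‖w‖ ≠ 0 := norm_ne_zero_iff.mpr hw
  rw [norm_smul, Real.norm_of_nonneg (balancingScale_pos ha hw).le, div_pow, mul_pow, hs,
    ← sq_abs a]
  field_simp
  ring

lemma networkFn_balance {d N : ℕ} (θ : Params d N) (x : E d) :
    networkFn (balance θ) x = networkFn θ x :=
  Finset.sum_congr rfl fun i _ => balanced_neuron_apply x (θ.1 i) (θ.2 i)

lemma paramNormSq_balance {d N : ℕ} (θ : Params d N) :
    paramNormSq (balance θ) = 2 * pathNorm θ := by
  rw [paramNormSq, ← Finset.sum_add_distrib, pathNorm, Finset.mul_sum]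
  exact Finset.sum_congr rfl fun i _ => balanced_neuron_sq_norm (θ.1 i) (θ.2 i)

lemma two_mul_pathNorm_le_paramNormSq {d N : ℕ} (θ : Params d N) :
    2 * pathNorm θ ≤ paramNormSq θ := by
  rw [pathNorm, paramNormSq, Finset.mul_sum, ← Finset.sum_add_distrib]
  refine Finset.sum_le_sum fun i _ => ?_
  rw [← mul_assoc, ← sq_abs (θ.1 i)]
  exact two_mul_le_add_sq _ _

theorem statement13_general (d N n : ℕ) (X : Fin n → E d)
    (Y : Fin n → ℝ) (lam : ℝ) (hlam : 0 < lam) :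
    (∀ θstar : Params d N,
      (∀ θ : Params d N,
          (∑ i, (networkFn θstar (X i) - Y i) ^ 2) / n + lam * pathNorm θstar ≤
            (∑ i, (networkFn θ (X i) - Y i) ^ 2) / n + lam * pathNorm θ) →
      ∃ θt : Params d N,
        (∀ θ : Params d N,
          (∑ i, (networkFn θt (X i) - Y i) ^ 2) / n + lam / 2 * paramNormSq θt ≤
            (∑ i, (networkFn θ (X i) - Y i) ^ 2) / n + lam / 2 * paramNormSq θ) ∧
        ∀ x : E d, ‖x‖ ≤ 1 → networkFn θstar x = networkFn θt x) ∧
    (∀ θstar : Params d N,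
      (∀ θ : Params d N,
          (∑ i, (networkFn θstar (X i) - Y i) ^ 2) / n + lam / 2 * paramNormSq θstar ≤
            (∑ i, (networkFn θ (X i) - Y i) ^ 2) / n + lam / 2 * paramNormSq θ) →
      ∀ θ : Params d N,
        (∑ i, (networkFn θstar (X i) - Y i) ^ 2) / n + lam * pathNorm θstar ≤
          (∑ i, (networkFn θ (X i) - Y i) ^ 2) / n + lam * pathNorm θ) := by
  set L : Params d N → ℝ := fun θ => (∑ i, (networkFn θ (X i) - Y i) ^ 2) / n
  have hL (θ : Params d N) : L (balance θ) = L θ := by simp only [L, networkFn_balance]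
  have hQb (θ : Params d N) : lam / 2 * paramNormSq (balance θ) = lam * pathNorm θ := by
    rw [paramNormSq_balance]; ring
  have hPQ (θ : Params d N) : lam * pathNorm θ ≤ lam / 2 * paramNormSq θ :=
    calc lam * pathNorm θ = lam / 2 * (2 * pathNorm θ) := by ring
      _ ≤ lam / 2 * paramNormSq θ := by gcongr; exact two_mul_pathNorm_le_paramNormSq θ
  exact ⟨fun θstar hstar => ⟨balance θstar,
      map_minimizes_add_upper_of_minimizes_add_lower hL hQb hPQ hstar,
      fun x _ => (networkFn_balance θstar x).symm⟩,
    fun θstar hstar => minimizes_add_lower_of_minimizes_add_upper hL hQb hPQ hstar⟩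

/-- equivalence of path-norm regularization and weight-decay regularization. -/
theorem statement13 (d N n : ℕ) (X : Fin n → E d) (hX : ∀ i, ‖X i‖ ≤ 1)
    (Y : Fin n → ℝ) (lam : ℝ) (hlam : 0 < lam) :
    (∀ θstar : Params d N,
      (∀ θ : Params d N,
          (∑ i, (networkFn θstar (X i) - Y i) ^ 2) / n + lam * pathNorm θstar ≤
            (∑ i, (networkFn θ (X i) - Y i) ^ 2) / n + lam * pathNorm θ) →
      ∃ θt : Params d N,
        (∀ θ : Params d N,
          (∑ i, (networkFn θt (X i) - Y i) ^ 2) / n + lam / 2 * paramNormSq θt ≤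
            (∑ i, (networkFn θ (X i) - Y i) ^ 2) / n + lam / 2 * paramNormSq θ) ∧
        ∀ x : E d, ‖x‖ ≤ 1 → networkFn θstar x = networkFn θt x) ∧
    (∀ θstar : Params d N,
      (∀ θ : Params d N,
          (∑ i, (networkFn θstar (X i) - Y i) ^ 2) / n + lam / 2 * paramNormSq θstar ≤
            (∑ i, (networkFn θ (X i) - Y i) ^ 2) / n + lam / 2 * paramNormSq θ) →
      ∀ θ : Params d N,
        (∑ i, (networkFn θstar (X i) - Y i) ^ 2) / n + lam * pathNorm θstar ≤
          (∑ i, (networkFn θ (X i) - Y i) ^ 2) / n + lam * pathNorm θ) :=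
  statement13_general d N n X Y lam hlam
end
end
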